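/- Let X be a quandle and E ⊆ X any set of representatives of the orbit set O_X. Then in H₂(Inn̄(X); ℤ), the subgroup generated by the homology classes of the 2-cycles [s̄_x | f] − [f | s̄_x] for x ∈ X and f ∈ Stab_{Inn̄(X)}(x) equals the subgroup generated by the homology classes of the 2-cycles [s̄_{x₀} | f] − [f | s̄_{x₀}] for x₀ ∈ E and f ∈ Stab_{Inn̄₀(X)}(x₀). -/

import Mathlib

/-!  Core framework: racks/quandles with right operation, inner automorphism group
(with opposite composition, acting on the right), associated group. -/

universe u v

noncomputable section

/-- A rack: a set with a right-distributive binary operation whose right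
translations are bijective. -/
structure RackStr (X : Type u) where
  op : X → X → X
  bij : ∀ y, Function.Bijective fun x => op x y
  distrib : ∀ x y z, op (op x y) z = op (op x z) (op y z)

/-- A quandle: a rack which is idempotent. -/
structure QuandleStr (X : Type u) extends RackStr X where
  idem : ∀ x, op x x = x

namespace RackStr

variable {X : Type u} (R : RackStr X)

/-- The right translation `s_y : x ↦ x * y`, as a permutation. -/
def s (y : X) : Equiv.Perm X := Equiv.ofBijective _ (R.bij y)

@[simp] lemma s_apply (y x : X) : R.s y x = R.op x y := rfl

/-- The right translation, as an element of the opposite of the permutation group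
(the inner automorphism group is equipped with the *opposite* composition,
so that it acts on `X` on the right). -/
def sop (y : X) : (Equiv.Perm X)ᵐᵒᵖ := MulOpposite.op (R.s y)

/-- The inner automorphism group `Inn(X)`: the subgroup (of the permutation
group with opposite multiplication) generated by the right translations. -/
def Inn : Subgroup (Equiv.Perm X)ᵐᵒᵖ := Subgroup.closure (Set.range R.sop)

/-- The relations defining the associated group `As(X)`. -/
def rels : Set (FreeGroup X) :=
  { r | ∃ x y, r = FreeGroup.of x * FreeGroup.of y *
      (FreeGroup.of y * FreeGroup.of (R.op x y))⁻¹ }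

/-- The associated group `As(X) = ⟨e_x (x ∈ X) ∣ e_x e_y = e_y e_{x*y}⟩`. -/
def As : Type u := PresentedGroup R.rels

instance : Group R.As := by unfold As; infer_instance

/-- The generator `e_x` of the associated group. -/
def e (x : X) : R.As := PresentedGroup.of x

lemma sop_rel (x y : X) : R.sop x * R.sop y = R.sop y * R.sop (R.op x y) := by
  unfold sop
  rw [← MulOpposite.op_mul, ← MulOpposite.op_mul]
  congr 1
  ext a
  simp only [Equiv.Perm.mul_apply, s_apply]
  exact R.distrib a x y

/-- The canonical homomorphism `ψ` from the associated group, sending `e_x` to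
`s_x`; its image is the inner automorphism group `Inn(X)`. -/
def psi : R.As →* (Equiv.Perm X)ᵐᵒᵖ :=
  PresentedGroup.toGroup (f := R.sop) (by
    rintro r ⟨x, y, rfl⟩
    rw [map_mul, map_mul, map_inv, map_mul]
    simp only [FreeGroup.lift_apply_of]
    rw [mul_inv_eq_one]
    exact R.sop_rel x y)

@[simp] lemma psi_e (x : X) : R.psi (R.e x) = R.sop x :=
  PresentedGroup.toGroup.of _

/-- The right action of the associated group on `X` (through `ψ`). -/
def act (x : X) (g : R.As) : X := (R.psi g).unop x

@[simp] lemma act_one (x : X) : R.act x 1 = x := by simp [act]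

lemma act_mul (x : X) (g h : R.As) : R.act x (g * h) = R.act (R.act x g) h := by
  simp [act, map_mul]

@[simp] lemma act_e (x y : X) : R.act x (R.e y) = R.op x y := by
  simp [act, sop]

/-- The orbit equivalence relation of the action of the inner automorphism group
(equivalently, of the associated group) on `X`. -/
def orbSetoid : Setoid X where
  r a b := ∃ g : R.As, R.act a g = b
  iseqv := by
    constructor
    · exact fun a => ⟨1, by simp⟩
    · rintro a b ⟨g, rfl⟩
      exact ⟨g⁻¹, by rw [← R.act_mul, mul_inv_cancel, act_one]⟩
    · rintro a b c ⟨g, rfl⟩ ⟨h, rfl⟩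
      exact ⟨g * h, R.act_mul a g h⟩

/-- The set of orbits (connected components) `O_X`. -/
def Orbits : Type u := Quotient R.orbSetoid

/-- The orbit of a point. -/
def orb (x : X) : R.Orbits := Quotient.mk R.orbSetoid x

lemma orb_op (x y : X) : R.orb (R.op x y) = R.orb x :=
  (Quot.sound ⟨R.e y, by simp⟩).symm

/-- The abelianization homomorphism `α : As(X) → ℤ^{⊕ O_X}`, sending `e_x` to the
basis element indexed by the orbit of `x`. -/
def alpha : R.As →* Multiplicative (R.Orbits →₀ ℤ) :=
  PresentedGroup.toGroup
    (f := fun x => Multiplicative.ofAdd (Finsupp.single (R.orb x) 1)) (by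
    rintro r ⟨x, y, rfl⟩
    rw [map_mul, map_mul, map_inv, map_mul]
    simp only [FreeGroup.lift_apply_of]
    rw [mul_inv_eq_one, R.orb_op x y, mul_comm])

@[simp] lemma alpha_e (x : X) :
    R.alpha (R.e x) = Multiplicative.ofAdd (Finsupp.single (R.orb x) 1) :=
  PresentedGroup.toGroup.of _

/-- `α × ψ`. -/
def alphaPsi : R.As →* Multiplicative (R.Orbits →₀ ℤ) × (Equiv.Perm X)ᵐᵒᵖ :=
  R.alpha.prod R.psi

/-- `Inn̄(X)`, the image of `α × ψ`. -/
def InnBar : Subgroup (Multiplicative (R.Orbits →₀ ℤ) × (Equiv.Perm X)ᵐᵒᵖ) :=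
  R.alphaPsi.range

/-- `s̄_x = (α × ψ)(e_x)` as an element of `Inn̄(X)`. -/
def sbar (x : X) : R.InnBar := ⟨R.alphaPsi (R.e x), ⟨R.e x, rfl⟩⟩

/-- The group homomorphism `ε : As(X) → ℤ` sending every generator to `1`. -/
def epsAs : R.As →* Multiplicative ℤ :=
  PresentedGroup.toGroup (f := fun _ => Multiplicative.ofAdd (1 : ℤ)) (by
    rintro r ⟨x, y, rfl⟩
    rw [map_mul, map_mul, map_inv, map_mul]
    simp only [FreeGroup.lift_apply_of]
    rw [mul_inv_eq_one])

@[simp] lemma epsAs_e (x : X) : R.epsAs (R.e x) = Multiplicative.ofAdd (1 : ℤ) :=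
  PresentedGroup.toGroup.of _

/-- `ε × ψ`. -/
def epsPsi : R.As →* Multiplicative ℤ × (Equiv.Perm X)ᵐᵒᵖ :=
  R.epsAs.prod R.psi

/-- The augmentation `ε₀ : ℤ^{⊕ O_X} → ℤ` sending each basis element to `1`. -/
def eps0 : (R.Orbits →₀ ℤ) →+ ℤ :=
  Finsupp.liftAddHom fun _ => AddMonoidHom.id ℤ

/-- `ε̄` on the ambient group `ℤ^{⊕ O_X} × Perm(X)ᵐᵒᵖ`: the composite of the first
projection with `ε₀`.  `Inn̄₀(X)` is `Inn̄(X) ∩ Ker ε̄`. -/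
def epsBar : Multiplicative (R.Orbits →₀ ℤ) × (Equiv.Perm X)ᵐᵒᵖ →* Multiplicative ℤ :=
  (AddMonoidHom.toMultiplicative R.eps0).comp (MonoidHom.fst _ _)

end RackStr

/-- The subgroup of (the opposite of) the permutation group consisting of the
permutations fixing `x`. -/
def fixedSub {X : Type u} (x : X) : Subgroup (Equiv.Perm X)ᵐᵒᵖ where
  carrier := { σ | σ.unop x = x }
  one_mem' := rfl
  mul_mem' := by
    intro a b ha hb
    simp only [Set.mem_setOf_eq, MulOpposite.unop_mul, Equiv.Perm.mul_apply] at *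
    rw [ha, hb]
  inv_mem' := by
    intro a ha
    simp only [Set.mem_setOf_eq, MulOpposite.unop_inv] at *
    conv_lhs => rw [← ha]
    exact Equiv.symm_apply_apply _ _

namespace RackStr

variable {X : Type u} (R : RackStr X)

/-- The stabilizer of `x ∈ X` in the associated group. -/
def stabAs (x : X) : Subgroup R.As := Subgroup.comap R.psi (fixedSub x)

lemma mem_stabAs {x : X} {g : R.As} : g ∈ R.stabAs x ↔ R.act x g = x := Iff.rfl

/-- `X` is (algebraically) connected when the inner automorphism group acts
transitively, equivalently when the associated group does. -/
def IsConnected : Prop := ∀ x y : X, ∃ g : R.As, R.act x g = y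

/-- `Inn₀(X) = ψ(Ker ε)`, the image under `ψ` of the kernel of `ε`
(equivalently, the image of `Inn̄₀(X)` under the second projection). -/
def Inn0 : Subgroup (Equiv.Perm X)ᵐᵒᵖ := Subgroup.map R.psi R.epsAs.ker

end RackStr

/-! Second group homology with trivial `ℤ` coefficients, via the inhomogeneous
bar resolution. -/

namespace GroupH2

variable (G : Type v) [Group G]

/-- The differential `d₂ : C₂ → C₁`, `[g|h] ↦ [h] - [gh] + [g]`. -/
def d2 : ((G × G) →₀ ℤ) →ₗ[ℤ] (G →₀ ℤ) :=
  Finsupp.lift _ ℤ _ fun p =>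
    Finsupp.single p.2 1 - Finsupp.single (p.1 * p.2) 1 + Finsupp.single p.1 1

/-- The differential `d₃ : C₃ → C₂`,
`[g|h|k] ↦ [h|k] - [gh|k] + [g|hk] - [g|h]`. -/
def d3 : ((G × G × G) →₀ ℤ) →ₗ[ℤ] ((G × G) →₀ ℤ) :=
  Finsupp.lift _ ℤ _ fun t =>
    Finsupp.single (t.2.1, t.2.2) 1 - Finsupp.single (t.1 * t.2.1, t.2.2) 1
      + Finsupp.single (t.1, t.2.1 * t.2.2) 1 - Finsupp.single (t.1, t.2.1) 1

/-- The group of (inhomogeneous) 2-cycles. -/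
def Z2 : Submodule ℤ ((G × G) →₀ ℤ) := LinearMap.ker (d2 G)

/-- The group of 2-boundaries, as a submodule of the 2-cycles. -/
def B2 : Submodule ℤ (Z2 G) := Submodule.comap (Z2 G).subtype (LinearMap.range (d3 G))

/-- The second group homology `H₂(G;ℤ)` with trivial integer coefficients. -/
def H2 := Z2 G ⧸ B2 G

instance : AddCommGroup (H2 G) := by unfold H2; infer_instance
instance : Module ℤ (H2 G) := by unfold H2; infer_instance

/-- The homology class of a 2-cycle. -/
def H2mk : Z2 G →ₗ[ℤ] H2 G := (B2 G).mkQ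

variable {G}

/-- The chain `[g|h] - [h|g]`; when `g` and `h` commute this is a cycle whose
homology class is the Pontryagin product `⟨g,h⟩`. -/
def pchain (g h : G) : (G × G) →₀ ℤ :=
  Finsupp.single (g, h) 1 - Finsupp.single (h, g) 1

end GroupH2

/-! The Pontryagin class `⟨g, h⟩` of commuting elements is additive in `h`, invariant under
simultaneous conjugation, and vanishes on `⟨g, gⁿ⟩`. In `As(X)` one has `g e_{x·g} = e_x g`, so
conjugating by `(α × ψ)(g)` moves a pair `(s̄_x, f)` with `f` fixing `x` to a pair `(s̄_{x₀}, f')`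
with `x₀ ∈ E` and `f'` fixing `x₀`. Since `s̄_{x₀}` fixes `x₀` (idempotency) and `ε̄(s̄_{x₀}) = 1`,
replacing `f'` by `s̄_{x₀}^{-ε̄(f')} f'` lands in `Inn̄₀(X)` without changing the class. -/

lemma Commute.of_semiconjBy {G : Type v} [Group G] {g h g' h' c : G} (hgh : Commute g h)
    (hg : SemiconjBy c g g') (hh : SemiconjBy c h h') : Commute g' h' := by
  obtain rfl := eq_mul_inv_of_mul_eq hg.eq.symm
  obtain rfl := eq_mul_inv_of_mul_eq hh.eq.symm
  exact hgh.conj c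

namespace GroupH2

variable {G : Type v} [Group G]

lemma d2_single (p : G × G) :
    d2 G (Finsupp.single p 1) =
      Finsupp.single p.2 1 - Finsupp.single (p.1 * p.2) 1 + Finsupp.single p.1 1 := by
  simp [d2]

lemma d3_single (t : G × G × G) :
    d3 G (Finsupp.single t 1) =
      Finsupp.single (t.2.1, t.2.2) 1 - Finsupp.single (t.1 * t.2.1, t.2.2) 1
        + Finsupp.single (t.1, t.2.1 * t.2.2) 1 - Finsupp.single (t.1, t.2.1) 1 := by
  simp [d3]

lemma pchain_mem_Z2 {g h : G} (hgh : Commute g h) : pchain g h ∈ Z2 G := by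
  simp only [Z2, LinearMap.mem_ker, pchain, map_sub, d2_single, hgh.eq]
  abel

lemma commute_of_pchain_mem_Z2 {g h : G} (hz : pchain g h ∈ Z2 G) : Commute g h := by
  classical
  by_contra hgh
  have hgh' : h * g ≠ g * h := fun h' => hgh h'.symm
  have := DFunLike.congr_fun hz (g * h)
  simp [pchain, d2_single, Finsupp.single_apply, hgh'] at this
  split_ifs at this <;> omega

lemma pchain_mul_right_sub_mem_range_d3 {g h k : G} (hh : Commute g h) (hk : Commute g k) :
    pchain g (h * k) - (pchain g h + pchain g k) ∈ LinearMap.range (d3 G) := by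
  refine ⟨Finsupp.single (g, h, k) 1 - Finsupp.single (h, g, k) 1
      + Finsupp.single (h, k, g) 1, ?_⟩
  simp only [map_add, map_sub, d3_single, pchain, hh.eq, hk.eq]
  abel

lemma pchain_conj_sub_mem_range_d3 {g h g' h' c : G} (hgh : Commute g h)
    (hg : SemiconjBy c g g') (hh : SemiconjBy c h h') :
    pchain g' h' - pchain g h ∈ LinearMap.range (d3 G) := by
  refine ⟨-Finsupp.single (c, g, h) 1 + Finsupp.single (g', c, h) 1
      - Finsupp.single (g', h', c) 1 + Finsupp.single (c, h, g) 1
      - Finsupp.single (h', c, g) 1 + Finsupp.single (h', g', c) 1, ?_⟩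
  simp only [map_add, map_sub, map_neg, d3_single, pchain, hg.eq, hh.eq, hgh.eq,
    (hgh.of_semiconjBy hg hh).eq]
  abel

def pontryaginClass (g h : G) (hgh : Commute g h) : H2 G :=
  H2mk G ⟨pchain g h, pchain_mem_Z2 hgh⟩

lemma H2mk_eq_pontryaginClass {g h : G} (z : Z2 G) (hz : (z : (G × G) →₀ ℤ) = pchain g h) :
    H2mk G z = pontryaginClass g h (commute_of_pchain_mem_Z2 (hz ▸ z.2)) :=
  congrArg (H2mk G) (Subtype.ext hz)

lemma pontryaginClass_mul_right {g h k : G} (hh : Commute g h) (hk : Commute g k) :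
    pontryaginClass g (h * k) (hh.mul_right hk) =
      pontryaginClass g h hh + pontryaginClass g k hk := by
  rw [pontryaginClass, pontryaginClass, pontryaginClass, ← map_add]
  exact (Submodule.Quotient.eq _).mpr (pchain_mul_right_sub_mem_range_d3 hh hk)

lemma pontryaginClass_self (g : G) : pontryaginClass g g (Commute.refl g) = 0 := by
  rw [pontryaginClass, ← map_zero (H2mk G)]
  congr
  simp [pchain]

lemma pontryaginClass_zpow_self (g : G) (n : ℤ) :
    pontryaginClass g (g ^ n) ((Commute.refl g).zpow_right n) = 0 := by
  induction n using Int.induction_on with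
  | zero =>
    simpa using pontryaginClass_mul_right (Commute.one_right g) (Commute.one_right g)
  | succ n ih =>
    have h := pontryaginClass_mul_right ((Commute.refl g).zpow_right n) (Commute.refl g)
    rw [ih, pontryaginClass_self, add_zero] at h
    simpa only [zpow_add_one] using h
  | pred n ih =>
    have h := pontryaginClass_mul_right ((Commute.refl g).zpow_right (-n - 1)) (Commute.refl g)
    simp only [pontryaginClass_self, add_zero, zpow_sub_one, inv_mul_cancel_right, ih] at h
    simpa only [zpow_sub_one] using h.symm

lemma pontryaginClass_zpow_mul {g h : G} (hgh : Commute g h) (n : ℤ) :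
    pontryaginClass g (g ^ n * h) (((Commute.refl g).zpow_right n).mul_right hgh) =
      pontryaginClass g h hgh := by
  rw [pontryaginClass_mul_right ((Commute.refl g).zpow_right n) hgh, pontryaginClass_zpow_self,
    zero_add]

lemma pontryaginClass_eq_of_semiconjBy {g h g' h' c : G} (hgh : Commute g h)
    (hg : SemiconjBy c g g') (hh : SemiconjBy c h h') :
    pontryaginClass g' h' (hgh.of_semiconjBy hg hh) = pontryaginClass g h hgh :=
  (Submodule.Quotient.eq _).mpr (pchain_conj_sub_mem_range_d3 hgh hg hh)

end GroupH2

open GroupH2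

lemma map_zpow_neg_toAdd_mul_eq_one {G : Type v} [Group G] (φ : G →* Multiplicative ℤ) {s : G}
    (hs : φ s = Multiplicative.ofAdd 1) (f : G) :
    φ (s ^ (-(φ f).toAdd) * f) = 1 := by
  apply Multiplicative.toAdd.injective
  simp [hs]

namespace RackStr

variable {X : Type u} (R : RackStr X)

lemma e_mul_e (x y : X) : R.e x * R.e y = R.e y * R.e (R.op x y) :=
  PresentedGroup.mk_eq_mk_of_mul_inv_mem ⟨x, y, rfl⟩

lemma semiconjBy_e_act (g : R.As) (x : X) : SemiconjBy g (R.e (R.act x g)) (R.e x) := by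
  let H : Subgroup R.As :=
    { carrier := {g | ∀ x, SemiconjBy g (R.e (R.act x g)) (R.e x)}
      one_mem' := fun x => by rw [act_one]; exact SemiconjBy.one_left _
      mul_mem' := fun hg hh x => by rw [act_mul]; exact (hg x).mul_left (hh _)
      inv_mem' := fun {g} hg x => by
        have h := hg (R.act x g⁻¹)
        rw [← act_mul, inv_mul_cancel, act_one] at h
        exact h.inv_symm_left }
  refine PresentedGroup.generated_by R.rels H (fun y x => ?_) g x
  change SemiconjBy (R.e y) (R.e (R.act x (R.e y))) (R.e x)
  rw [act_e]
  exact (R.e_mul_e x y).symm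

lemma epsBar_sbar (x : X) :
    R.epsBar (R.sbar x : Multiplicative (R.Orbits →₀ ℤ) × (Equiv.Perm X)ᵐᵒᵖ) =
      Multiplicative.ofAdd 1 := by
  simp [sbar, epsBar, alphaPsi, eps0]

def stabInnBar (x : X) : Subgroup R.InnBar :=
  (fixedSub x).comap ((MonoidHom.snd _ _).comp R.InnBar.subtype)

lemma mem_stabInnBar {x : X} {f : R.InnBar} :
    f ∈ R.stabInnBar x ↔ (f : Multiplicative (R.Orbits →₀ ℤ) × (Equiv.Perm X)ᵐᵒᵖ).2.unop x = x :=
  Iff.rfl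

lemma mul_mul_inv_mem_stabInnBar {x : X} {c f : R.InnBar}
    (hf : f ∈ R.stabInnBar
      ((c : Multiplicative (R.Orbits →₀ ℤ) × (Equiv.Perm X)ᵐᵒᵖ).2.unop x)) :
    c * f * c⁻¹ ∈ R.stabInnBar x := by
  rw [mem_stabInnBar] at hf ⊢
  simp only [Subgroup.coe_mul, Subgroup.coe_inv, Prod.snd_mul, Prod.snd_inv,
    MulOpposite.unop_mul, MulOpposite.unop_inv, Equiv.Perm.mul_apply, hf]
  exact Equiv.symm_apply_apply _ _

lemma exists_pontryaginClass_eq_of_orb_eq {x x₀ : X} (horb : R.orb x₀ = R.orb x)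
    {f : R.InnBar} (hf : f ∈ R.stabInnBar x) (hcomm : Commute (R.sbar x) f) :
    ∃ f' ∈ R.stabInnBar x₀, ∃ hcomm' : Commute (R.sbar x₀) f',
      pontryaginClass (R.sbar x₀) f' hcomm' = pontryaginClass (R.sbar x) f hcomm := by
  obtain ⟨g, rfl⟩ : ∃ g, R.act x₀ g = x := Quotient.exact horb
  let c : R.InnBar := ⟨R.alphaPsi g, g, rfl⟩
  have hs : SemiconjBy c (R.sbar (R.act x₀ g)) (R.sbar x₀) :=
    Subtype.ext ((R.semiconjBy_e_act g x₀).map R.alphaPsi)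
  exact ⟨c * f * c⁻¹, R.mul_mul_inv_mem_stabInnBar hf, _,
    pontryaginClass_eq_of_semiconjBy hcomm hs (SemiconjBy.conj_mk c f)⟩

end RackStr

namespace QuandleStr

variable {X : Type u} (Q : QuandleStr X)

lemma sbar_mem_stabInnBar (x : X) : Q.sbar x ∈ Q.stabInnBar x :=
  (Q.act_e x x).trans (Q.idem x)

lemma exists_epsBar_eq_one_pontryaginClass_eq {x : X} {f : Q.InnBar}
    (hf : f ∈ Q.stabInnBar x) (hcomm : Commute (Q.sbar x) f) :
    ∃ f' ∈ Q.stabInnBar x,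
      Q.epsBar (f' : Multiplicative (Q.Orbits →₀ ℤ) × (Equiv.Perm X)ᵐᵒᵖ) = 1 ∧
      ∃ hcomm' : Commute (Q.sbar x) f',
        pontryaginClass (Q.sbar x) f' hcomm' = pontryaginClass (Q.sbar x) f hcomm := by
  have hs : (Q.epsBar.comp Q.InnBar.subtype) (Q.sbar x) = Multiplicative.ofAdd 1 :=
    Q.epsBar_sbar x
  exact ⟨_, mul_mem (zpow_mem (Q.sbar_mem_stabInnBar x) _) hf,
    map_zpow_neg_toAdd_mul_eq_one (Q.epsBar.comp Q.InnBar.subtype) hs f, _,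
    pontryaginClass_zpow_mul hcomm _⟩

end QuandleStr

open GroupH2 in
/-- **Lemma simp-lem.**  For a quandle `X` and any representative
set `E` of the orbit set `O_X`, the subgroup of `H₂(Inn̄(X);ℤ)` generated by the
classes of the cycles `[s̄_x|f] - [f|s̄_x]` (`x ∈ X`, `f ∈ Stab_{Inn̄(X)}(x)`)
equals the one generated by those for `x₀ ∈ E` and `f ∈ Stab_{Inn̄₀(X)}(x₀)`. -/
theorem pontryagin_span_eq_of_reps (X : Type u) (Q : QuandleStr X)
    (E : Set X) (hE : ∀ x : X, ∃! y : X, y ∈ E ∧ Q.toRackStr.orb y = Q.toRackStr.orb x) :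
    letI R := Q.toRackStr
    Submodule.span ℤ
      { c : H2 R.InnBar | ∃ (x : X) (f : R.InnBar),
          (f : Multiplicative (R.Orbits →₀ ℤ) × (Equiv.Perm X)ᵐᵒᵖ).2.unop x = x ∧
          ∃ z : Z2 R.InnBar,
            (z : (R.InnBar × R.InnBar) →₀ ℤ) = pchain (R.sbar x) f ∧
            c = H2mk R.InnBar z } =
    Submodule.span ℤ
      { c : H2 R.InnBar | ∃ (x₀ : X) (f : R.InnBar), x₀ ∈ E ∧
          (f : Multiplicative (R.Orbits →₀ ℤ) × (Equiv.Perm X)ᵐᵒᵖ).2.unop x₀ = x₀ ∧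
          R.epsBar (f : Multiplicative (R.Orbits →₀ ℤ) × (Equiv.Perm X)ᵐᵒᵖ) = 1 ∧
          ∃ z : Z2 R.InnBar,
            (z : (R.InnBar × R.InnBar) →₀ ℤ) = pchain (R.sbar x₀) f ∧
            c = H2mk R.InnBar z } := by
  refine le_antisymm (Submodule.span_le.mpr ?_) (Submodule.span_mono ?_)
  · rintro c ⟨x, f, hf, z, hz, rfl⟩
    obtain ⟨x₀, ⟨hx₀, horb⟩, -⟩ := hE x
    obtain ⟨f', hf', hcomm', hconj⟩ := Q.exists_pontryaginClass_eq_of_orb_eq horb hf _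
    obtain ⟨f'', hf'', heps, hcomm'', hnorm⟩ :=
      Q.exists_epsBar_eq_one_pontryaginClass_eq hf' hcomm'
    rw [H2mk_eq_pontryaginClass z hz, ← hconj, ← hnorm]
    exact Submodule.subset_span
      ⟨x₀, f'', hx₀, hf'', heps, ⟨_, pchain_mem_Z2 hcomm''⟩, rfl, rfl⟩
  · rintro c ⟨x₀, f, -, hf, -, z, hz, rfl⟩
    exact ⟨x₀, f, hf, z, hz, rfl⟩
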